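/- Under the hypotheses of the previous lemma (W diagonal with ordered entries in Γ₂, 0 < a ≤ √(σ₂(W)/(3(n−1)(n−2))), σ₃(W+aI) ≥ 0, W₁₁ > 6(n−2)a), for every j ∈ {2,…,n} one has |W_{jj}| ≤ (n−1)²a + 7(n−1)σ₂(W)/(5W₁₁). -/
import Mathlib


open Finset

/-- k-th elementary symmetric polynomial of lam : Fin n → ℝ. -/
noncomputable def esym (n k : ℕ) (lam : Fin n → ℝ) : ℝ :=
  ∑ s ∈ Finset.univ.powersetCard k, ∏ i ∈ s, lam i

/-- The Garding cone Γ₂. -/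
def GammaTwo (n : ℕ) (lam : Fin n → ℝ) : Prop :=
  0 < esym n 1 lam ∧ 0 < esym n 2 lam

lemma sum_pcard_insert {ι : Type*} [DecidableEq ι] (f : ι → ℝ) {x : ι} {A : Finset ι}
    (hx : x ∉ A) (k : ℕ) :
    ∑ t ∈ (insert x A).powersetCard (k+1), ∏ i ∈ t, f i
      = f x * (∑ t ∈ A.powersetCard k, ∏ i ∈ t, f i)
        + ∑ t ∈ A.powersetCard (k+1), ∏ i ∈ t, f i := by
  rw [Finset.powersetCard_succ_insert hx]
  have hdisj : Disjoint (A.powersetCard (k+1)) ((A.powersetCard k).image (insert x)) := by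
    rw [Finset.disjoint_right]
    intro t ht ht'
    obtain ⟨u, hu, rfl⟩ := Finset.mem_image.1 ht
    exact hx ((Finset.mem_powersetCard.1 ht').1 (Finset.mem_insert_self x u))
  rw [Finset.sum_union hdisj]
  have himg : ∑ t ∈ (A.powersetCard k).image (insert x), ∏ i ∈ t, f i
      = f x * ∑ t ∈ A.powersetCard k, ∏ i ∈ t, f i := by
    rw [Finset.sum_image ?_]
    · rw [Finset.mul_sum]
      refine Finset.sum_congr rfl fun u hu => ?_
      exact Finset.prod_insert fun h => hx ((Finset.mem_powersetCard.1 hu).1 h)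
    · intro u hu v hv huv
      have hxu : x ∉ u := fun h => hx ((Finset.mem_powersetCard.1 hu).1 h)
      have hxv : x ∉ v := fun h => hx ((Finset.mem_powersetCard.1 hv).1 h)
      have := congrArg (fun (t : Finset ι) => t.erase x) huv
      simpa [Finset.erase_insert hxu, Finset.erase_insert hxv] using this
  rw [himg]; ring

lemma esymm_one_eq {ι : Type*} [DecidableEq ι] (f : ι → ℝ) (A : Finset ι) :
    ∑ t ∈ A.powersetCard 1, ∏ i ∈ t, f i = ∑ i ∈ A, f i := by
  rw [Finset.powersetCard_one, Finset.sum_map]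
  simp

lemma esymm_two_eq {ι : Type*} [DecidableEq ι] (f : ι → ℝ) (A : Finset ι) :
    2 * ∑ t ∈ A.powersetCard 2, ∏ i ∈ t, f i
      = (∑ i ∈ A, f i)^2 - ∑ i ∈ A, (f i)^2 := by
  induction A using Finset.induction_on with
  | empty =>
      have : ((∅ : Finset ι)).powersetCard 2 = ∅ := by simp
      simp [this]
  | @insert x A hx ih =>
      have h := sum_pcard_insert f hx 1
      norm_num at h
      rw [h, esymm_one_eq, Finset.sum_insert hx, Finset.sum_insert hx]
      linear_combination ih

lemma esymm_three_eq {ι : Type*} [DecidableEq ι] (f : ι → ℝ) (A : Finset ι) :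
    6 * ∑ t ∈ A.powersetCard 3, ∏ i ∈ t, f i
      = (∑ i ∈ A, f i)^3 - 3*(∑ i ∈ A, f i)*(∑ i ∈ A, (f i)^2)
        + 2 * ∑ i ∈ A, (f i)^3 := by
  induction A using Finset.induction_on with
  | empty =>
      have : ((∅ : Finset ι)).powersetCard 3 = ∅ := by simp
      simp [this]
  | @insert x A hx ih =>
      have h := sum_pcard_insert f hx 2
      norm_num at h
      rw [h, Finset.sum_insert hx, Finset.sum_insert hx, Finset.sum_insert hx]
      linear_combination ih + 3 * f x * esymm_two_eq f A

set_option maxHeartbeats 2000000 in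
theorem guan_lemma_second {n : ℕ} (hn : 3 ≤ n) (lam : Fin n → ℝ) (hord : Antitone lam)
    (hG : GammaTwo n lam) (a : ℝ) (ha : 0 < a)
    (ha2 : a ≤ Real.sqrt (esym n 2 lam / (3 * ((n : ℝ) - 1) * ((n : ℝ) - 2))))
    (h3 : esym n 3 (fun i => lam i + a) ≥ 0)
    (h11 : lam ⟨0, by omega⟩ > 6 * ((n : ℝ) - 2) * a) :
    ∀ j : Fin n, j ≠ ⟨0, by omega⟩ →
      |lam j| ≤ ((n : ℝ) - 1) ^ 2 * a +
        7 * ((n : ℝ) - 1) * esym n 2 lam / (5 * lam ⟨0, by omega⟩) := by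
  classical
  obtain ⟨hS1, hS2⟩ := hG
  intro j hj
  have hn0 : 0 < n := by omega
  have h1n : 1 < n := by omega
  have hn1n : n - 1 < n := by omega
  set N : ℝ := (n : ℝ) with hNdef
  have hN : (3:ℝ) ≤ N := by rw [hNdef]; exact_mod_cast hn
  set i0 : Fin n := ⟨0, hn0⟩ with hi0def
  set i1 : Fin n := ⟨1, h1n⟩ with hi1def
  set iL : Fin n := ⟨n-1, hn1n⟩ with hiLdef
  have hL : lam i0 > 6 * (N - 2) * a := h11
  have hj' : j ≠ i0 := hj
  have hLpos : 0 < lam i0 := by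
    have h2 : (0:ℝ) < N - 2 := by linarith
    have := mul_pos (mul_pos (by norm_num : (0:ℝ) < 6) h2) ha
    linarith
  show |lam j| ≤ (N - 1) ^ 2 * a + 7 * (N - 1) * esym n 2 lam / (5 * lam i0)
  set g : Fin n → ℝ := fun i => lam i + a with hgdef
  have h3g0 : esym n 3 g ≥ 0 := h3
  have hgap : ∀ i, g i = lam i + a := fun _ => rfl
  have hgi0 : g i0 = lam i0 + a := rfl
  have hgi1 : g i1 = lam i1 + a := rfl
  have hgiL : g iL = lam iL + a := rfl
  have hgj : g j = lam j + a := rfl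
  set A : Finset (Fin n) := Finset.univ.erase i0 with hAdef
  have hi0A : i0 ∉ A := Finset.notMem_erase _ _
  have hins : insert i0 A = Finset.univ := Finset.insert_erase (Finset.mem_univ _)
  have hi1A : i1 ∈ A := by
    refine Finset.mem_erase.2 ⟨?_, Finset.mem_univ _⟩
    simp [hi0def, hi1def, Fin.ext_iff]
  have hiLA : iL ∈ A := by
    refine Finset.mem_erase.2 ⟨?_, Finset.mem_univ _⟩
    simp only [hi0def, hiLdef, Ne, Fin.ext_iff]
    omega
  set s := ∑ i ∈ A, g i with hsdef
  set q := ∑ i ∈ A, (g i)^2 with hqdef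
  set r := ∑ i ∈ A, (g i)^3 with hrdef
  set s1 := ∑ i ∈ A.erase i1, g i with hs1def
  set q1 := ∑ i ∈ A.erase i1, (g i)^2 with hq1def
  set sL := ∑ i ∈ A.erase iL, g i with hsLdef
  set qL := ∑ i ∈ A.erase iL, (g i)^2 with hqLdef
  have hN_cast : ((n:ℕ) : ℝ) = N := hNdef.symm
  -- nonnegativity of sums of squares
  have hq0 : 0 ≤ q := by
    rw [hqdef]; exact Finset.sum_nonneg fun i _ => sq_nonneg _
  have hq1nn : 0 ≤ q1 := by
    rw [hq1def]; exact Finset.sum_nonneg fun i _ => sq_nonneg _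
  have hqLnn : 0 ≤ qL := by
    rw [hqLdef]; exact Finset.sum_nonneg fun i _ => sq_nonneg _
  -- splits
  have hSsplit : ∑ i, g i = g i0 + s := by
    rw [← hins, Finset.sum_insert hi0A, hsdef]
  have hQsplit : ∑ i, (g i)^2 = (g i0)^2 + q := by
    rw [← hins, Finset.sum_insert hi0A, hqdef]
  have hRsplit : ∑ i, (g i)^3 = (g i0)^3 + r := by
    rw [← hins, Finset.sum_insert hi0A, hrdef]
  have hs1split : g i1 + s1 = s := by
    rw [hsdef, hs1def]; exact Finset.add_sum_erase A g hi1A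
  have hq1split : (g i1)^2 + q1 = q := by
    rw [hqdef, hq1def]; exact Finset.add_sum_erase A (fun i => (g i)^2) hi1A
  have hsLsplit : g iL + sL = s := by
    rw [hsdef, hsLdef]; exact Finset.add_sum_erase A g hiLA
  have hqLsplit : (g iL)^2 + qL = q := by
    rw [hqdef, hqLdef]; exact Finset.add_sum_erase A (fun i => (g i)^2) hiLA
  -- cube bound
  have hy0 : 0 ≤ Real.sqrt q := Real.sqrt_nonneg q
  have hy2 : Real.sqrt q ^ 2 = q := Real.sq_sqrt hq0
  have hrb : r ≤ Real.sqrt q * q := by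
    have hterm : ∀ i ∈ A, (g i)^3 ≤ Real.sqrt q * (g i)^2 := by
      intro i hi
      have h1 : (g i)^2 ≤ q := by
        rw [hqdef]
        exact Finset.single_le_sum (f := fun i => (g i)^2) (fun i _ => sq_nonneg _) hi
      have h2 : g i ≤ Real.sqrt q := by
        calc g i ≤ |g i| := le_abs_self _
          _ = Real.sqrt ((g i)^2) := (Real.sqrt_sq_eq_abs _).symm
          _ ≤ Real.sqrt q := Real.sqrt_le_sqrt h1
      have h3c : (g i)^3 = g i * (g i)^2 := by ring
      rw [h3c]
      exact mul_le_mul_of_nonneg_right h2 (sq_nonneg _)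
    calc r = ∑ i ∈ A, (g i)^3 := hrdef
      _ ≤ ∑ i ∈ A, Real.sqrt q * (g i)^2 := Finset.sum_le_sum hterm
      _ = Real.sqrt q * q := by rw [← Finset.mul_sum, ← hqdef]
  -- esym identities
  have hE1 : esym n 1 lam = ∑ i, lam i := by
    unfold esym; rw [Finset.powersetCard_one, Finset.sum_map]; simp
  rw [hE1] at hS1
  have E2l : 2 * esym n 2 lam = (∑ i, lam i)^2 - ∑ i, (lam i)^2 := esymm_two_eq lam Finset.univ
  have E2g : 2 * esym n 2 g = (∑ i, g i)^2 - ∑ i, (g i)^2 := esymm_two_eq g Finset.univ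
  have E2g' : 2 * esym n 2 g = (∑ i, g i)^2 - ∑ i, (g i)^2 := esymm_two_eq g Finset.univ
  have E3g : 6 * esym n 3 g = (∑ i, g i)^3 - 3*(∑ i, g i)*(∑ i, (g i)^2)
      + 2 * ∑ i, (g i)^3 := esymm_three_eq g Finset.univ
  have hSg' : ∑ i, g i = (∑ i, lam i) + N * a := by
    calc ∑ i, g i = ∑ i : Fin n, (lam i + a) := Finset.sum_congr rfl fun i _ => hgap i
      _ = (∑ i, lam i) + N * a := by
          rw [Finset.sum_add_distrib, Finset.sum_const, Finset.card_univ, Fintype.card_fin,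
            nsmul_eq_mul, hN_cast]
  have hQg' : ∑ i, (g i)^2 = (∑ i, (lam i)^2) + 2*a*(∑ i, lam i) + N * a^2 := by
    have e : ∀ i : Fin n, (g i)^2 = (lam i)^2 + 2*a*lam i + a^2 := fun i => by
      rw [hgap]; ring
    calc ∑ i, (g i)^2 = ∑ i : Fin n, ((lam i)^2 + 2*a*lam i + a^2) :=
          Finset.sum_congr rfl fun i _ => e i
      _ = (∑ i, (lam i)^2) + 2*a*(∑ i, lam i) + N * a^2 := by
          rw [Finset.sum_add_distrib, Finset.sum_add_distrib, ← Finset.mul_sum,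
            Finset.sum_const, Finset.card_univ, Fintype.card_fin, nsmul_eq_mul, hN_cast]
  -- key equations
  have h2g : esym n 2 g = g i0 * s + (s^2 - q)/2 := by
    rw [hSsplit, hQsplit] at E2g
    linear_combination E2g / 2
  have h3geq : esym n 3 g = g i0 * ((s^2 - q)/2) + (s^3 - 3*s*q + 2*r)/6 := by
    rw [hSsplit, hQsplit, hRsplit] at E3g
    linear_combination E3g / 6
  have hmu2 : esym n 2 g = esym n 2 lam + (N-1)*a*(∑ i, lam i) + N*(N-1)/2*a^2 := by
    rw [hSg', hQg'] at E2g'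
    linear_combination E2g' / 2 - E2l / 2
  have hSig1 : ∑ i, lam i = g i0 + s - N*a := by
    rw [← hSsplit, hSg']; ring
  -- ordering facts
  have hjval : (1:ℕ) ≤ j.val := by
    have hne : j.val ≠ 0 := fun h => hj' (by rw [hi0def]; exact Fin.ext h)
    omega
  have hji1 : i1 ≤ j := by
    rw [hi1def, Fin.le_def]; exact hjval
  have hjiL : j ≤ iL := by
    rw [hiLdef, Fin.le_def]
    have := j.isLt
    simp only
    omega
  have hupj : lam j ≤ lam i1 := hord hji1
  have hlowj : lam iL ≤ lam j := hord hjiL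
  -- sqrt bound
  have ha2' : 3*(N-1)*(N-2)*a^2 ≤ esym n 2 lam := by
    have hden : (0:ℝ) < 3*(N-1)*(N-2) :=
      mul_pos (mul_pos (by norm_num) (by linarith)) (by linarith)
    have hx0 : (0:ℝ) ≤ esym n 2 lam / (3*(N-1)*(N-2)) := (div_pos hS2 hden).le
    have hss : Real.sqrt (esym n 2 lam / (3*(N-1)*(N-2))) ^ 2
        = esym n 2 lam / (3*(N-1)*(N-2)) := Real.sq_sqrt hx0
    have hsqle : a^2 ≤ esym n 2 lam / (3*(N-1)*(N-2)) := by
      have := pow_le_pow_left₀ ha.le ha2 2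
      rw [hss] at this
      exact this
    rw [le_div_iff₀ hden] at hsqle
    linarith
  -- abstract into opaque reals
  set y := Real.sqrt q with hydef
  set Sig2 := esym n 2 lam with hSig2def
  set G2 := esym n 2 g with hG2def
  set G3 := esym n 3 g with hG3def
  set SL := ∑ i, lam i with hSLdef
  set L0 := lam i0 with hL0def
  set l1 := lam i1 with hl1def
  set lL := lam iL with hlLdef
  set lj := lam j with hljdef
  set m0 := g i0 with hm0def
  set m1 := g i1 with hm1def
  set mL := g iL with hmLdef
  set mj := g j with hmjdef
  clear_value N y Sig2 G2 G3 SL L0 l1 lL lj m0 m1 mL mj s q r s1 q1 sL qL i0 i1 iL g A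
  clear hord ha2 hj hj' hE1 E2l E2g E2g' E3g hSg' hQg' hgap hi0A hins hi1A hiLA
  clear hSsplit hQsplit hRsplit
  clear hsdef hqdef hrdef hs1def hq1def hsLdef hqLdef hydef hSig2def hG2def hG3def
  clear hSLdef hL0def hl1def hlLdef hljdef hm0def hm1def hmLdef hmjdef
  clear hi0def hi1def hiLdef hNdef hgdef hAdef hji1 hjiL hjval h3 h11 hn hn0 h1n hn1n
  clear hN_cast j iL i1 i0 g A lam n
  -- ====== pure real arithmetic from here on ======
  -- positivity of sigma2(mu)
  have h2gpos : 0 < G2 := by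
    rw [hmu2]
    have t1 : 0 ≤ (N-1)*a*SL :=
      mul_nonneg (mul_nonneg (by linarith : (0:ℝ) ≤ N - 1) ha.le) hS1.le
    have t2 : 0 ≤ N*(N-1)/2*a^2 :=
      mul_nonneg (by
        have : (0:ℝ) ≤ N*(N-1) := mul_nonneg (by linarith) (by linarith)
        linarith) (sq_nonneg a)
    linarith
  -- Step 1 : s > 0
  have hmu0s : 0 < m0 + s := by
    have h1 : 0 < N*a := mul_pos (by linarith) ha
    have h2 : m0 + s = SL + N*a := by rw [hSig1]; ring
    rw [h2]; linarith
  have hs : 0 < s := by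
    by_contra hcon
    push_neg at hcon
    linarith [h2gpos, h2g, hq0, mul_nonneg (neg_nonneg.2 hcon) hmu0s.le, sq_nonneg s]
  -- Step 2 : e2 ≥ 0, i.e. q ≤ s^2
  have he2q : q ≤ s^2 := by
    by_contra hcon
    push_neg at hcon
    have hamgm : 4*s*r ≤ s^4 + 3*q^2 := by
      have hy2s : y^2*s^2 = q*s^2 := by rw [hy2]
      linarith [sq_nonneg (s^2 - q), sq_nonneg (y*s - q), hy2s,
        mul_le_mul_of_nonneg_left hrb (by linarith : (0:ℝ) ≤ 4*s)]
    have hgs : 0 < m0 * s + (s^2 - q)/2 := by rw [← h2g]; exact h2gpos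
    have h3' : 0 ≤ m0 * ((s^2 - q)/2) + (s^3 - 3*s*q + 2*r)/6 := by
      rw [← h3geq]; exact h3g0
    linarith [mul_nonneg hs.le h3', hamgm,
      mul_pos hgs (by linarith : (0:ℝ) < -((s^2 - q)/2))]
  -- Step 3 : tail sum after removing i1 is nonneg
  have hT : 0 ≤ s1 := by
    by_contra hcon
    push_neg at hcon
    have hsq1 : s^2 = m1^2 + 2*(m1*s1) + s1^2 := by rw [← hs1split]; ring
    linarith [he2q, hq1nn, hq1split, hsq1, sq_nonneg s1,
      mul_pos (show 0 < m1 + s1 by linarith [hs1split]) (show 0 < -s1 by linarith)]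
  have hgi1s : m1 ≤ s := by linarith
  -- Step 4 : mL ≥ -s
  have hlow : -s ≤ mL := by
    rcases le_or_gt 0 mL with h | h
    · linarith
    · by_contra hcon
      push_neg at hcon
      have hsLpos : 0 < sL := by linarith
      have hsqL : s^2 = mL^2 + 2*(mL*sL) + sL^2 := by rw [← hsLsplit]; ring
      linarith [he2q, hqLnn, hqLsplit, hsqL,
        mul_pos hsLpos (show 0 < -(2*mL + sL) by linarith [hsLsplit])]
  -- master inequality
  have hkey : (L0 - (N-2)*a) * (s - (N-1)*a) ≤ 7/6 * Sig2 := by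
    have he2' : 0 ≤ (s^2 - q)/2 := by linarith
    have h2g' : G2 = (L0 + a) * s + (s^2 - q)/2 := by rw [← hgi0]; exact h2g
    have hNaSL : (N-1)*a*SL = (N-1)*a*(L0+a) + (N-1)*a*s - (N-1)*a*(N*a) := by
      rw [hSig1, hgi0]; ring
    linarith [h2g', hmu2, hNaSL, he2', ha2']
  have hmaster : L0 * (s - (N-1)*a) ≤ 7/5 * Sig2 := by
    rcases le_or_gt (s - (N-1)*a) 0 with hx | hx
    · linarith [mul_nonneg hLpos.le (neg_nonneg.2 hx), hS2]
    · have h56 : (5/6)*L0 ≤ L0 - (N-2)*a := by linarith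
      linarith [hkey, mul_le_mul_of_nonneg_right h56 hx.le]
  -- convert to division form
  have hsle : s ≤ (N-1)*a + (7/5*Sig2)/L0 := by
    have h := (le_div_iff₀ hLpos).2 (by linarith [hmaster] :
      (s - (N-1)*a) * L0 ≤ 7/5*Sig2)
    linarith
  have hdivpos : 0 < 5 * L0 := by linarith
  have hfr2 : (7/5*Sig2)/L0 ≤ 7*(N-1)*Sig2/(5*L0) := by
    rw [div_le_div_iff₀ hLpos hdivpos]
    have h1 : 0 ≤ (N-2) * (Sig2 * L0) :=
      mul_nonneg (by linarith) (mul_pos hS2 hLpos).le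
    linarith [h1]
  have hNa : N*a ≤ (N-1)^2*a := by
    have h1 : 0 ≤ (N-3)*N*a :=
      mul_nonneg (mul_nonneg (by linarith) (by linarith)) ha.le
    linarith [h1, ha]
  -- finish
  rw [abs_le]
  have hup : lj ≤ s - a := by linarith [hgi1, hupj, hgi1s]
  have hdn : -s - a ≤ lj := by linarith [hgiL, hlowj, hlow]
  have hfrnn : 0 ≤ (7/5*Sig2)/L0 := by positivity
  constructor
  · linarith [hsle, hfr2, hNa, ha, hdn]
  · linarith [hsle, hfr2, hNa, ha, hup]
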